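/- Let E be a complex Hilbert space, let W be a finite-dimensional complex vector space with basis (𝔞_j)_{j=1,…,r}, and let w be a nonzero continuous linear functional on E. Equip the algebraic tensor product W ⊗[ℂ] E' (E' the continuous dual of E) with the right action of compact operators given on simple tensors by (α ⊗ f) · a = α ⊗ (f ∘ a). Then for every v ∈ W ⊗[ℂ] E' there exist compact operators a_1, …, a_r on E such that v = Σ_{j=1}^r (𝔞_j ⊗ w) · a_j = Σ_{j=1}^r 𝔞_j ⊗ (w ∘ a_j). In particular, the finite set {𝔞_j ⊗ w : j = 1, …, r} generates W ⊗[ℂ] E' under the action of compact operators. -/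

import Mathlib

open TensorProduct

section CompactFactorization

variable {𝕜 E : Type*} [NontriviallyNormedField 𝕜] [LocallyCompactSpace 𝕜]
  [NormedAddCommGroup E] [NormedSpace 𝕜 E]

theorem ContinuousLinearMap.isCompactOperator_smulRight (f : E →L[𝕜] 𝕜) (x : E) :
    IsCompactOperator (f.smulRight x) :=
  (isCompactOperator_of_locallyCompactSpace_dom f).clm_comp (toSpanSingleton 𝕜 x)

/-- The witness is `f.smulRight x` for any `x` with `w x = 1`. -/
theorem ContinuousLinearMap.exists_isCompactOperator_comp_eq {w : E →L[𝕜] 𝕜} (hw : w ≠ 0)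
    (f : E →L[𝕜] 𝕜) : ∃ a : E →L[𝕜] E, IsCompactOperator a ∧ w.comp a = f := by
  obtain ⟨x, hx⟩ : ∃ x, w x = 1 :=
    LinearMap.surjective_iff_ne_zero.mpr (by exact_mod_cast hw : (w : E →ₗ[𝕜] 𝕜) ≠ 0) 1
  refine ⟨f.smulRight x, f.isCompactOperator_smulRight x, ?_⟩
  ext z
  simp [hx]

end CompactFactorization

theorem TensorProduct.exists_eq_sum_basis_tmul {R M N ι : Type*} [CommSemiring R]
    [AddCommMonoid M] [Module R M] [AddCommMonoid N] [Module R N] [Fintype ι]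
    (b : Module.Basis ι R M) (x : M ⊗[R] N) : ∃ n : ι → N, x = ∑ i, b i ⊗ₜ[R] n i := by
  obtain ⟨c, rfl⟩ := TensorProduct.eq_repr_basis_left b x
  exact ⟨c, Finsupp.sum_fintype _ _ fun i => tmul_zero N (b i)⟩

theorem finite_generation_of_tensor_dual_general
    {E : Type*} [NormedAddCommGroup E] [InnerProductSpace ℂ E]
    {W : Type*} [AddCommGroup W] [Module ℂ W]
    {r : ℕ} (𝔞 : Module.Basis (Fin r) ℂ W)
    (w : E →L[ℂ] ℂ) (hw : w ≠ 0)
    (v : W ⊗[ℂ] (E →L[ℂ] ℂ)) :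
    ∃ a : Fin r → (E →L[ℂ] E),
      (∀ j, IsCompactOperator (a j)) ∧
      v = ∑ j : Fin r, (𝔞 j) ⊗ₜ[ℂ] (w.comp (a j)) := by
  obtain ⟨f, rfl⟩ := TensorProduct.exists_eq_sum_basis_tmul 𝔞 v
  choose a ha_compact ha_comp using
    fun j => ContinuousLinearMap.exists_isCompactOperator_comp_eq hw (f j)
  exact ⟨a, ha_compact, by simp only [ha_comp]⟩

/-- Every element of `W ⊗[ℂ] E'` is generated by the finite set `{𝔞_j ⊗ w}` under
the right action `(α ⊗ f) · a = α ⊗ (f ∘ a)` of compact operators. -/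
theorem finite_generation_of_tensor_dual
    {E : Type*} [NormedAddCommGroup E] [InnerProductSpace ℂ E] [CompleteSpace E]
    {W : Type*} [AddCommGroup W] [Module ℂ W] [FiniteDimensional ℂ W]
    {r : ℕ} (𝔞 : Module.Basis (Fin r) ℂ W)
    (w : E →L[ℂ] ℂ) (hw : w ≠ 0)
    (v : W ⊗[ℂ] (E →L[ℂ] ℂ)) :
    ∃ a : Fin r → (E →L[ℂ] E),
      (∀ j, IsCompactOperator (a j)) ∧
      v = ∑ j : Fin r, (𝔞 j) ⊗ₜ[ℂ] (w.comp (a j)) :=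
  finite_generation_of_tensor_dual_general 𝔞 w hw v
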